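/- Let a be a positive integer divisible by 8, let K be a complete nonarchimedean valued field extension of ℚ_5 with valuation ord_5 normalized by ord_5(5) = 1, and let M_1, …, M_a be matrices with rows and columns indexed by positive integers, with entries in the ring of integers of K, such that ord_5((M_ℓ)_{ij}) ≥ g_{ij} for all ℓ = 1, …, a and all i, j ≥ 1, where g_{ij} is defined as follows: set n = 5i − j; g_{ij} = +∞ if n < 0 (i.e., (M_ℓ)_{ij} = 0); g_{ij} = (⌊n/7⌋ + n̄)/4 if n ≥ 0, where n̄ is the least nonnegative residue of n modulo 7. Then the product M_1⋯M_a (whose entries are given by convergent series) satisfies ord_5((M_1⋯M_a)_{ij}) > 5a/12 + (i−j)/8 for all i, j ≥ 1. -/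
import Mathlib


/-!
STATEMENT 14 (Lemma 4.1): Let `8 ∣ a`, `a > 0`, `K` a complete nonarchimedean valued
extension of `ℚ_5` with valuation `ord_5` (`ord_5 5 = 1`), and `M_1, …, M_a` matrices
indexed by positive integers, with entries in the ring of integers of `K`, such that
`ord_5 (M_ℓ)_{ij} ≥ g_{ij}` where (with `n = 5i − j`): `g_{ij} = +∞` if `n < 0`
(i.e. `(M_ℓ)_{ij} = 0`), and `g_{ij} = (⌊n/7⌋ + n̄)/4` if `n ≥ 0` (`n̄` the least
nonnegative residue of `n` mod 7).  Then
`ord_5 (M_1⋯M_a)_{ij} > 5a/12 + (i−j)/8` for all `i, j ≥ 1`.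

Since `(M_ℓ)_{ik} = 0` whenever `k > 5i`, the entry `(M_1⋯M_a)_{ij}` — a priori a
convergent series over paths `i = k_0, k_1, …, k_{a-1}, k_a = j` — is in fact the
*finite* sum over paths with all intermediate indices in `[1, 5^a · max i j]`, which
is how `matProd` below defines it.
-/

open scoped BigOperators

local instance fact5 : Fact (Nat.Prime 5) := ⟨by norm_num⟩

/-- The lower bound `g_{ij}` for `ord_5 G_{5i−j}` for the polynomial `x⁷ + c·x`. -/
noncomputable def g5 (i j : ℕ) : WithTop ℝ :=
  let n : ℤ := 5 * i - j
  if n < 0 then ⊤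
  else (((((n / 7 : ℤ) : ℝ) + ((n % 7 : ℤ) : ℝ)) / 4 : ℝ) : WithTop ℝ)

/-- The `(i,j)` entry of the product `M_0 ⋯ M_{a-1}` of matrices indexed by the
positive integers: the sum over all paths `k : Fin (a+1) → ℕ` with `k 0 = i`,
`k a = j` and all nodes in `[1, B · max i j]` of the products of the corresponding
entries.  (For row-finite matrices — entries vanishing for `j > 5i`, say, with
`5^a ≤ B` — this equals the full, convergent, sum over all paths.) -/
def matProd {K : Type*} [CommRing K] (a B : ℕ) (M : Fin a → ℕ → ℕ → K)
    (i j : ℕ) : K :=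
  ∑ k ∈ (Fintype.piFinset fun _ : Fin (a + 1) => Finset.Icc 1 (B * max i j)).filter
      (fun k => k 0 = i ∧ k (Fin.last a) = j),
    ∏ t : Fin a, M t (k t.castSucc) (k t.succ)


/-- Potential (times 8) used in the telescoping argument. -/
def pp5 (m : ℕ) : ℕ := if m = 2 ∨ m = 6 then 3 else if m = 3 then 2 else if m = 4 then 1 else 0

lemma pp5_le (m : ℕ) : pp5 m ≤ 3 := by unfold pp5; split_ifs <;> omega

lemma core_int (k k' : ℕ) (hk : 1 ≤ k) (hk' : 1 ≤ k') :
    4 + ((k:ℤ) - k') + pp5 k' - pp5 k ≤ 2 * ((5*(k:ℤ) - k')/7) + 2*((5*(k:ℤ)-k') % 7) := by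
  unfold pp5
  split_ifs <;> omega

lemma core_real (k k' : ℕ) (hk : 1 ≤ k) (hk' : 1 ≤ k') :
    ((1/2 + ((k:ℝ) - k')/8 + ((pp5 k' : ℝ)/8 - (pp5 k : ℝ)/8) : ℝ) : WithTop ℝ)
      ≤ g5 k k' := by
  have hg : g5 k k' = if (5*(k:ℤ) - (k':ℤ)) < 0 then (⊤ : WithTop ℝ)
      else ((((((5*(k:ℤ) - k') / 7 : ℤ) : ℝ) + (((5*(k:ℤ) - k') % 7 : ℤ) : ℝ)) / 4 : ℝ) : WithTop ℝ) := rfl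
  rw [hg]
  split_ifs with h
  · exact le_top
  · rw [WithTop.coe_le_coe]
    have H := core_int k k' hk hk'
    have H2 : ((4 + ((k:ℤ) - k') + pp5 k' - pp5 k : ℤ) : ℝ)
        ≤ ((2 * ((5*(k:ℤ) - k')/7) + 2*((5*(k:ℤ)-k') % 7) : ℤ) : ℝ) := by exact_mod_cast H
    push_cast at H2
    linarith

lemma v_one_eq_zero {K : Type*} [Field K] (v : K → WithTop ℝ)
    (hv0 : ∀ x, v x = ⊤ ↔ x = 0) (hv_mul : ∀ x y, v (x * y) = v x + v y) :
    v 1 = 0 := by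
  have h1 : v 1 ≠ ⊤ := by
    simp only [ne_eq, hv0]; exact one_ne_zero
  obtain ⟨x, hx⟩ := WithTop.ne_top_iff_exists.mp h1
  have := hv_mul 1 1
  rw [mul_one, ← hx, ← WithTop.coe_add, WithTop.coe_eq_coe] at this
  have hx0 : x = 0 := by linarith
  rw [← hx, hx0, WithTop.coe_zero]

lemma v_prod {K : Type*} [Field K] (v : K → WithTop ℝ)
    (hv0 : ∀ x, v x = ⊤ ↔ x = 0) (hv_mul : ∀ x y, v (x * y) = v x + v y)
    {α : Type*} (s : Finset α) (f : α → K) :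
    v (∏ x ∈ s, f x) = ∑ x ∈ s, v (f x) := by
  induction s using Finset.cons_induction with
  | empty => simpa using v_one_eq_zero v hv0 hv_mul
  | cons a s ha ih => rw [Finset.prod_cons, Finset.sum_cons, hv_mul, ih]

lemma lt_v_sum {K : Type*} [Field K] (v : K → WithTop ℝ)
    (hv0 : ∀ x, v x = ⊤ ↔ x = 0) (hv_add : ∀ x y, min (v x) (v y) ≤ v (x + y))
    {α : Type*} (s : Finset α) (f : α → K) (c : WithTop ℝ) (hc : c ≠ ⊤)
    (h : ∀ x ∈ s, c < v (f x)) :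
    c < v (∑ x ∈ s, f x) := by
  induction s using Finset.cons_induction with
  | empty =>
      rw [Finset.sum_empty, (hv0 0).mpr rfl]
      exact lt_top_iff_ne_top.mpr hc
  | cons a s ha ih =>
      rw [Finset.sum_cons]
      refine lt_of_lt_of_le ?_ (hv_add (f a) (∑ x ∈ s, f x))
      exact lt_min (h a (Finset.mem_cons_self a s))
        (ih fun x hx => h x (Finset.mem_cons_of_mem hx))

theorem five_matrix_product_valuation_bound
    (K : Type*) [Field K] [Algebra ℚ_[5] K]
    (v : K → WithTop ℝ)
    (hv0 : ∀ x, v x = ⊤ ↔ x = 0)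
    (hv_mul : ∀ x y, v (x * y) = v x + v y)
    (hv_add : ∀ x y, min (v x) (v y) ≤ v (x + y))
    (hv5 : v (5 : K) = 1)
    (a : ℕ) (ha : 0 < a) (hdvd : 8 ∣ a)
    (M : Fin a → ℕ → ℕ → K)
    (hint : ∀ (ℓ : Fin a) (i j : ℕ), 1 ≤ i → 1 ≤ j → (0 : WithTop ℝ) ≤ v (M ℓ i j))
    (hM : ∀ (ℓ : Fin a) (i j : ℕ), 1 ≤ i → 1 ≤ j → g5 i j ≤ v (M ℓ i j)) :
    ∀ i j : ℕ, 1 ≤ i → 1 ≤ j →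
      ((5 * (a : ℝ) / 12 + ((i : ℝ) - (j : ℝ)) / 8 : ℝ) : WithTop ℝ) <
        v (matProd a (5 ^ a) M i j) := by

  intro i j hi hj
  have ha8 : 8 ≤ a := Nat.le_of_dvd ha hdvd
  have ha8' : (8:ℝ) ≤ (a:ℝ) := by exact_mod_cast ha8
  rw [matProd]
  refine lt_v_sum v hv0 hv_add _ _ _ (WithTop.coe_ne_top) ?_
  intro k hk
  rw [Finset.mem_filter] at hk
  obtain ⟨hk1, hk2, hk3⟩ := hk
  rw [Fintype.mem_piFinset] at hk1
  have hk1' : ∀ s, 1 ≤ k s := fun s => (Finset.mem_Icc.mp (hk1 s)).1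
  -- the path as a function on ℕ
  set KK : ℕ → ℕ := fun m => k ⟨min m a, by omega⟩ with hKK
  have hKpos : ∀ m, 1 ≤ KK m := fun m => hk1' _
  have hcast : ∀ t : Fin a, k t.castSucc = KK (t : ℕ) := by
    intro t
    congr 1
    exact Fin.ext (by simp [Nat.min_eq_left t.isLt.le])
  have hsucc : ∀ t : Fin a, k t.succ = KK ((t : ℕ) + 1) := by
    intro t
    congr 1
    exact Fin.ext (by simp [Nat.min_eq_left (Nat.succ_le_of_lt t.isLt)])
  have hK0 : KK 0 = i := by
    rw [← hk2]
    exact congrArg k (Fin.ext (by simp))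
  have hKa : KK a = j := by
    rw [← hk3]
    exact congrArg k (Fin.ext (by simp [Fin.last]))
  -- potential function
  set G : ℕ → ℝ := fun m => (KK m : ℝ)/8 - (pp5 (KK m) : ℝ)/8 with hG
  -- valuation of the product
  have hvp : v (∏ t : Fin a, M t (k t.castSucc) (k t.succ))
      = ∑ t : Fin a, v (M t (KK (t:ℕ)) (KK ((t:ℕ)+1))) := by
    rw [v_prod v hv0 hv_mul]
    exact Finset.sum_congr rfl fun t _ => by rw [hcast t, hsucc t]
  rw [hvp]
  -- lower bound each factor
  have hstep : ∀ t : Fin a,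
      ((1/2 + (G (t:ℕ) - G ((t:ℕ)+1)) : ℝ) : WithTop ℝ)
        ≤ v (M t (KK (t:ℕ)) (KK ((t:ℕ)+1))) := by
    intro t
    refine le_trans ?_ (hM t _ _ (hKpos _) (hKpos _))
    have heq : (1/2 + (G (t:ℕ) - G ((t:ℕ)+1)) : ℝ)
        = 1/2 + ((KK (t:ℕ) : ℝ) - (KK ((t:ℕ)+1) : ℝ))/8
          + ((pp5 (KK ((t:ℕ)+1)) : ℝ)/8 - (pp5 (KK (t:ℕ)) : ℝ)/8) := by
      simp only [hG]; ring
    rw [heq]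
    exact core_real (KK (t:ℕ)) (KK ((t:ℕ)+1)) (hKpos _) (hKpos _)
  -- sum the lower bounds
  have hsum : ((∑ m ∈ Finset.range a, (1/2 + (G m - G (m+1)) : ℝ) : ℝ) : WithTop ℝ)
      ≤ ∑ t : Fin a, v (M t (KK (t:ℕ)) (KK ((t:ℕ)+1))) := by
    rw [WithTop.coe_sum, ← Fin.sum_univ_eq_sum_range (fun m => ((1/2 + (G m - G (m+1)) : ℝ) : WithTop ℝ))]
    exact Finset.sum_le_sum fun t _ => hstep t
  refine lt_of_lt_of_le ?_ hsum
  rw [WithTop.coe_lt_coe]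
  have htel : ∑ m ∈ Finset.range a, ((G m - G (m+1)) : ℝ) = G 0 - G a :=
    Finset.sum_range_sub' G a
  rw [Finset.sum_add_distrib, Finset.sum_const, Finset.card_range, htel]
  have hGi : G 0 = (i:ℝ)/8 - (pp5 i : ℝ)/8 := by
    rw [show G 0 = (KK 0 : ℝ)/8 - (pp5 (KK 0) : ℝ)/8 from rfl, hK0]
  have hGj : G a = (j:ℝ)/8 - (pp5 j : ℝ)/8 := by
    rw [show G a = (KK a : ℝ)/8 - (pp5 (KK a) : ℝ)/8 from rfl, hKa]
  rw [hGi, hGj]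
  have hppi : (pp5 i : ℝ) ≤ 3 := by exact_mod_cast pp5_le i
  have hppj : (0:ℝ) ≤ (pp5 j : ℝ) := Nat.cast_nonneg _
  rw [nsmul_eq_mul]
  linarith
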